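/- Let K₁ > 0, K₂ ≥ 0, K_d > 0, A_tot > 0, g_tot > 0, and for B ≥ 0 let Φ_B(x) be the cubic with coefficients a = K₁, b = 1 + K₂ + (g_tot + B − A_tot + K_d)·K₁, c = (1 + K₂)·(B − A_tot + K_d) + (g_tot − A_tot)·K_d·K₁, d = −(1 + K₂)·A_tot·K_d, and let A_qss(B) denote the unique positive root of Φ_B. Then A_qss is strictly decreasing: for all 0 ≤ B₁ < B₂, A_qss(B₂) < A_qss(B₁). -/

import Mathlib

/-!
Dividing the cubic `Φ_B(x)` by `K₁ (x + K_d) (x + (1 + K₂)/K₁)` turns `Φ_B(x) = 0` into the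
conservation law of the activator,
`A_tot = x + g_tot · x / (x + (1 + K₂)/K₁) + B · x / (x + K_d)`:
free activator plus activator bound to the promoter plus activator bound to the target.
The right-hand side is strictly increasing both in the free activator `x > 0` and in `B`,
so raising `B` at fixed `A_tot` must lower the free activator.
-/

open Set

noncomputable def totalActivator (g K Kd B x : ℝ) : ℝ :=
  x + g * (x / (x + K)) + B * (x / (x + Kd))

lemma strictMonoOn_div_add_const {K : ℝ} (hK : 0 < K) :
    StrictMonoOn (fun x : ℝ => x / (x + K)) (Ici 0) := by
  intro x hx y hy hxy
  simp only [mem_Ici] at hx hy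
  rw [div_lt_div_iff₀ (by linarith) (by linarith)]
  nlinarith

section totalActivator

variable {g K Kd : ℝ}

lemma strictMonoOn_totalActivator (hg : 0 ≤ g) (hK : 0 < K) (hKd : 0 < Kd) {B : ℝ}
    (hB : 0 ≤ B) : StrictMonoOn (totalActivator g K Kd B) (Ici 0) := by
  intro x hx y hy hxy
  have hK' := mul_le_mul_of_nonneg_left
    ((strictMonoOn_div_add_const hK).monotoneOn hx hy hxy.le) hg
  have hKd' := mul_le_mul_of_nonneg_left
    ((strictMonoOn_div_add_const hKd).monotoneOn hx hy hxy.le) hB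
  unfold totalActivator
  linarith

lemma totalActivator_strictMono_left (hKd : 0 < Kd) {x : ℝ} (hx : 0 < x) :
    StrictMono fun B => totalActivator g K Kd B x := by
  intro B₁ B₂ hB
  have := mul_lt_mul_of_pos_right hB (show 0 < x / (x + Kd) by positivity)
  unfold totalActivator
  linarith

end totalActivator

lemma totalActivator_eq_of_cubic_eq_zero {K₁ K₂ Kd Atot gtot B x : ℝ}
    (hK₁ : 0 < K₁) (hK₂ : 0 ≤ K₂) (hKd : 0 < Kd) (hx : 0 < x)
    (h : K₁ * x ^ 3 + (1 + K₂ + (gtot + B - Atot + Kd) * K₁) * x ^ 2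
        + ((1 + K₂) * (B - Atot + Kd) + (gtot - Atot) * Kd * K₁) * x
        + (-((1 + K₂) * Atot * Kd)) = 0) :
    totalActivator gtot ((1 + K₂) / K₁) Kd B x = Atot := by
  have : 0 < x + (1 + K₂) / K₁ := by positivity
  unfold totalActivator
  field_simp
  linear_combination h

theorem Aqss_strictly_decreasing_general (K₁ K₂ Kd Atot gtot : ℝ)
    (hK₁ : 0 < K₁) (hK₂ : 0 ≤ K₂) (hKd : 0 < Kd)
    (hgtot : 0 < gtot)
    (Aqss : ℝ → ℝ)
    (hpos : ∀ B : ℝ, 0 ≤ B → 0 < Aqss B)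
    (hroot : ∀ B : ℝ, 0 ≤ B →
      K₁ * (Aqss B) ^ 3
        + (1 + K₂ + (gtot + B - Atot + Kd) * K₁) * (Aqss B) ^ 2
        + ((1 + K₂) * (B - Atot + Kd) + (gtot - Atot) * Kd * K₁) * (Aqss B)
        + (-((1 + K₂) * Atot * Kd)) = 0) :
    ∀ B₁ B₂ : ℝ, 0 ≤ B₁ → B₁ < B₂ → Aqss B₂ < Aqss B₁ := by
  intro B₁ B₂ hB₁ hB
  have hB₂ : 0 ≤ B₂ := hB₁.trans hB.le
  have hK : 0 < (1 + K₂) / K₁ := by positivity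
  have h₁ := totalActivator_eq_of_cubic_eq_zero hK₁ hK₂ hKd (hpos B₁ hB₁) (hroot B₁ hB₁)
  have h₂ := totalActivator_eq_of_cubic_eq_zero hK₁ hK₂ hKd (hpos B₂ hB₂) (hroot B₂ hB₂)
  rw [← (strictMonoOn_totalActivator hgtot.le hK hKd hB₂).lt_iff_lt
    (hpos B₂ hB₂).le (hpos B₁ hB₁).le, h₂, ← h₁]
  exact totalActivator_strictMono_left hKd (hpos B₁ hB₁) hB

/-- The quasi-steady-state free-activator concentration `A_qss(B)`, the
unique positive root of the cubic `Φ_B`, is strictly decreasing in the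
total target protein concentration `B`. -/
theorem Aqss_strictly_decreasing (K₁ K₂ Kd Atot gtot : ℝ)
    (hK₁ : 0 < K₁) (hK₂ : 0 ≤ K₂) (hKd : 0 < Kd)
    (hAtot : 0 < Atot) (hgtot : 0 < gtot)
    (Aqss : ℝ → ℝ)
    (hpos : ∀ B : ℝ, 0 ≤ B → 0 < Aqss B)
    (hroot : ∀ B : ℝ, 0 ≤ B →
      K₁ * (Aqss B) ^ 3
        + (1 + K₂ + (gtot + B - Atot + Kd) * K₁) * (Aqss B) ^ 2
        + ((1 + K₂) * (B - Atot + Kd) + (gtot - Atot) * Kd * K₁) * (Aqss B)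
        + (-((1 + K₂) * Atot * Kd)) = 0) :
    ∀ B₁ B₂ : ℝ, 0 ≤ B₁ → B₁ < B₂ → Aqss B₂ < Aqss B₁ :=
  Aqss_strictly_decreasing_general K₁ K₂ Kd Atot gtot hK₁ hK₂ hKd hgtot Aqss hpos hroot
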